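/- Let λ ≥ -1/2 be a real number and let Δ ≥ 3. If T is a tree with n vertices and maximum degree Δ that contains two distinct vertices a and b with deg_T(a) = Δ and deg_T(b) ≥ 3, then there exists a tree T* with n vertices and maximum degree Δ such that GRM_λ(T*) < GRM_λ(T). -/

import Mathlib

open SimpleGraph

/-- Degree of a vertex (classical decidability). -/
noncomputable def deg {V : Type*} [Fintype V] (G : SimpleGraph V) (v : V) : ℕ :=
  letI := Classical.decEq V
  letI : DecidableRel G.Adj := Classical.decRel _
  G.degree v

/-- Maximum degree of a graph (classical decidability). -/
noncomputable def maxDeg {V : Type*} [Fintype V] (G : SimpleGraph V) : ℕ :=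
  letI := Classical.decEq V
  letI : DecidableRel G.Adj := Classical.decRel _
  G.maxDegree

/-- The general reduced second Zagreb index
`GRM_λ(G) = Σ_{ab ∈ E(G)} (deg a + λ)(deg b + λ)`. -/
noncomputable def GRM {V : Type*} [Fintype V] (l : ℝ) (G : SimpleGraph V) : ℝ :=
  letI := Classical.decEq V
  letI : DecidableRel G.Adj := Classical.decRel _
  ∑ e ∈ G.edgeFinset,
    Sym2.lift ⟨fun a b => ((G.degree a : ℝ) + l) * ((G.degree b : ℝ) + l),
      fun a b => by ring⟩ e

/-- A unicyclic graph: connected with exactly as many edges as vertices. -/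
def IsUnicyclic {V : Type*} [Fintype V] (G : SimpleGraph V) : Prop :=
  G.Connected ∧ G.edgeSet.ncard = Fintype.card V

/-- A vertex lies on a cycle of `G`. -/
def OnCycle {V : Type*} (G : SimpleGraph V) (v : V) : Prop :=
  ∃ (u : V) (w : G.Walk u u), w.IsCycle ∧ v ∈ w.support

/-!
Let `u` be a vertex of degree at least three as far from `a` as possible (so `u ≠ a`), `w` its
neighbour towards `a` and `x ≠ c` two further neighbours. Every vertex farther from `a` than `u`
has degree at most two, so the branch at `x` ends in a leaf `ℓ` whose neighbour is `u` or has
degree at most two. Replacing the edge `uc` by `ℓc` yields a tree in which only `u` loses and only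
`ℓ` gains a unit of degree, so the maximum degree `Δ = deg a` survives. Expanding `GRM_λ`
bilinearly in this change of degrees, the index drops by at least `(deg u - 2)(deg c + 2λ) + 1`,
which is positive because `deg c ≥ 1` and `λ ≥ -1/2`; the `+ 1` comes from `deg w ≥ 2`.
-/

def sym2Mul {V R : Type*} [CommMagma R] (f : V → R) : Sym2 V → R :=
  Sym2.lift ⟨fun u v => f u * f v, fun _ _ => mul_comm _ _⟩

@[simp] lemma sym2Mul_mk {V R : Type*} [CommMagma R] (f : V → R) (u v : V) :
    sym2Mul f s(u, v) = f u * f v := rfl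

namespace SimpleGraph

section Handshake

variable {V R : Type*} [Fintype V] [DecidableEq V] (G : SimpleGraph V) [DecidableRel G.Adj]

theorem sum_darts_eq_sum_neighborFinset [AddCommMonoid R] (F : V → V → R) :
    ∑ d : G.Dart, F d.fst d.snd = ∑ v, ∑ w ∈ G.neighborFinset v, F v w := by
  rw [← Finset.sum_fiberwise Finset.univ (fun d : G.Dart => d.fst)]
  refine Finset.sum_congr rfl fun v _ => ?_
  rw [dart_fst_fiber, Finset.sum_image fun _ _ _ _ h => G.dartOfNeighborSet_injective v h]
  exact (Finset.sum_subtype _ (fun w => G.mem_neighborFinset v w) (F v)).symm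

theorem sum_darts_eq_sum_edgeFinset [AddCommMonoid R] (F : V → V → R) :
    ∑ d : G.Dart, F d.fst d.snd =
      ∑ e ∈ G.edgeFinset, Sym2.lift ⟨fun u v => F u v + F v u, fun _ _ => add_comm _ _⟩ e := by
  rw [← Finset.sum_fiberwise_of_maps_to (g := Dart.edge) (t := G.edgeFinset)
    (fun d _ => G.mem_edgeFinset.mpr d.edge_mem)]
  refine Finset.sum_congr rfl fun e he => ?_
  induction e using Sym2.ind with
  | _ u v =>
    let d : G.Dart := ⟨(u, v), G.mem_edgeFinset.mp he⟩
    rw [show s(u, v) = d.edge from rfl, Dart.edge_fiber, Finset.sum_pair d.symm_ne.symm]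
    rfl

theorem sum_mul_sum_neighborFinset [CommSemiring R] (f g : V → R) :
    ∑ v, f v * ∑ w ∈ G.neighborFinset v, g w =
      ∑ e ∈ G.edgeFinset,
        Sym2.lift ⟨fun u v => f u * g v + f v * g u, fun _ _ => add_comm _ _⟩ e := by
  simp_rw [Finset.mul_sum]
  rw [← G.sum_darts_eq_sum_neighborFinset fun v w => f v * g w]
  exact G.sum_darts_eq_sum_edgeFinset fun v w => f v * g w

theorem sum_sym2Mul_add [CommSemiring R] (f g : V → R) :
    ∑ e ∈ G.edgeFinset, sym2Mul (f + g) e =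
      ∑ e ∈ G.edgeFinset, sym2Mul f e + ∑ v, g v * ∑ w ∈ G.neighborFinset v, f w +
        ∑ e ∈ G.edgeFinset, sym2Mul g e := by
  rw [sum_mul_sum_neighborFinset, ← Finset.sum_add_distrib, ← Finset.sum_add_distrib]
  refine Finset.sum_congr rfl fun e _ => ?_
  induction e using Sym2.ind
  simp only [sym2Mul_mk, Pi.add_apply, Sym2.lift_mk]
  ring

theorem sum_sym2Mul_single_sub_single [CommRing R] [IsDomain R] [CharZero R] (ℓ u : V) :
    ∑ e ∈ G.edgeFinset, sym2Mul (Pi.single ℓ 1 - Pi.single u 1 : V → R) e =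
      -(if G.Adj u ℓ then 1 else 0) := by
  set δ : V → R := Pi.single ℓ 1 - Pi.single u 1
  have htwice : 2 * ∑ e ∈ G.edgeFinset, sym2Mul δ e = ∑ v, δ v * ∑ w ∈ G.neighborFinset v, δ w := by
    rw [sum_mul_sum_neighborFinset, Finset.mul_sum]
    refine Finset.sum_congr rfl fun e _ => ?_
    induction e using Sym2.ind
    simp only [sym2Mul_mk, Sym2.lift_mk]
    ring
  apply mul_left_cancel₀ (two_ne_zero (α := R))
  rw [htwice]
  simp only [δ, Pi.sub_apply, Pi.single_apply, Finset.sum_sub_distrib, Finset.sum_ite_eq',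
    mem_neighborFinset, adj_comm, sub_mul, ite_mul, one_mul, zero_mul, Finset.mem_univ,
    ↓reduceIte, SimpleGraph.irrefl, zero_sub, sub_zero, mul_neg, mul_ite, mul_one, mul_zero]
  split_ifs <;> norm_num

end Handshake

section Distance

variable {V : Type*} {G : SimpleGraph V} {a u v w x : V}

lemma Connected.dist_le_dist_add_one (hG : G.Connected) (h : G.Adj u v) (a : V) :
    G.dist v a ≤ G.dist u a + 1 := by
  simpa [dist_eq_one_iff_adj.mpr h.symm, add_comm] using
    hG.dist_triangle (u := v) (v := u) (w := a)

lemma Connected.exists_adj_dist_add_one (hG : G.Connected) (h : u ≠ a) :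
    ∃ v, G.Adj u v ∧ G.dist v a + 1 = G.dist u a := by
  obtain ⟨p, hp⟩ := hG.exists_walk_length_eq_dist u a
  cases p with
  | nil => exact absurd rfl h
  | cons huv q =>
    refine ⟨_, huv, le_antisymm ?_ ?_⟩
    · simpa [← hp] using dist_le q
    · exact hG.dist_le_dist_add_one huv.symm a

lemma Walk.dist_add_one_le_length [DecidableEq V] (p : G.Walk u a) (hv : v ∈ p.support)
    (hvu : v ≠ u) : G.dist v a + 1 ≤ p.length := by
  have hlen : (p.takeUntil v hv).length + (p.dropUntil v hv).length = p.length := by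
    rw [← Walk.length_append, Walk.take_spec]
  have : (p.takeUntil v hv).length ≠ 0 := fun h => hvu (Walk.eq_of_length_eq_zero h).symm
  have := dist_le (p.dropUntil v hv)
  omega

lemma IsTree.eq_of_adj_of_dist_le (hG : G.IsTree) {r₁ r₂ : V} (h₁ : G.Adj u r₁)
    (h₂ : G.Adj u r₂) (hd₁ : G.dist r₁ a ≤ G.dist u a) (hd₂ : G.dist r₂ a ≤ G.dist u a) :
    r₁ = r₂ := by
  classical
  have geodesic_cons {r : V} (h : G.Adj u r) (hd : G.dist r a ≤ G.dist u a) :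
      ∃ q : G.Walk r a, (Walk.cons h q).IsPath := by
    obtain ⟨q, hq, hlen⟩ := hG.connected.exists_path_of_dist r a
    refine ⟨q, hq.cons fun hu => ?_⟩
    have := q.dist_add_one_le_length hu h.ne
    omega
  obtain ⟨q₁, hq₁⟩ := geodesic_cons h₁ hd₁
  obtain ⟨q₂, hq₂⟩ := geodesic_cons h₂ hd₂
  have := congrArg (·.val.snd) ((hG.isAcyclic.subsingleton_path u a).elim ⟨_, hq₁⟩ ⟨_, hq₂⟩)
  simpa using this

lemma Connected.two_le_degree_of_adj_of_dist_lt [Fintype (G.neighborSet w)] (hG : G.Connected)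
    (hw : w ≠ a) (h : G.Adj w u) (hd : G.dist w a < G.dist u a) : 2 ≤ G.degree w := by
  classical
  obtain ⟨v, hwv, hv⟩ := hG.exists_adj_dist_add_one hw
  rw [← card_neighborFinset_eq_degree,
    ← Finset.card_pair (a := u) (b := v) (by rintro rfl; omega)]
  exact Finset.card_le_card fun x hx => by
    rcases Finset.mem_insert.mp hx with rfl | hx
    · simpa using h
    · simpa [Finset.mem_singleton.mp hx] using hwv

lemma IsTree.exists_leaf_beyond [Finite V] (hG : G.IsTree) (hux : G.Adj u x)
    (hx : G.dist u a < G.dist x a) :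
    ∃ ℓ p, G.neighborSet ℓ = {p} ∧ (p = u ∨ G.dist u a < G.dist p a) ∧ ℓ ≠ u ∧
      ∀ c ≠ x, (G.deleteEdges {s(u, c)}).Reachable u ℓ := by
  classical
  have hconn := hG.connected
  -- `ℓ` is a vertex farthest from `a` among those whose geodesic to `a` runs through `x`
  obtain ⟨ℓ, hℓ, hmax⟩ := Set.exists_max_image {v | G.dist v a = G.dist v x + G.dist x a}
    (G.dist · a) (Set.toFinite _) ⟨x, by simp⟩
  simp only [Set.mem_ofPred_eq] at hℓ hmax
  have hℓa : ℓ ≠ a := by rintro rfl; rw [dist_self] at hℓ; omega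
  obtain ⟨p, hℓp, hp⟩ := hconn.exists_adj_dist_add_one hℓa
  have hnbr (r : V) (hr : G.Adj ℓ r) : r = p := by
    refine hG.eq_of_adj_of_dist_le (a := a) hr hℓp ?_ (by omega)
    by_contra! hfar
    have := hconn.dist_le_dist_add_one hr a
    have := hconn.dist_le_dist_add_one hr x
    have := hconn.dist_triangle (u := r) (v := x) (w := a)
    have := hmax r (by omega)
    omega
  refine ⟨ℓ, p, Set.ext fun r => ⟨hnbr r, by rintro rfl; exact hℓp⟩, ?_, ?_, ?_⟩
  · by_contra! h
    obtain rfl : ℓ = x := hconn.dist_eq_zero_iff.mp (by omega)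
    exact h.1 (hG.eq_of_adj_of_dist_le (a := a) hℓp hux.symm (by omega) (by omega))
  · rintro rfl; omega
  · intro c hcx
    obtain ⟨q, hq⟩ := hconn.exists_walk_length_eq_dist ℓ x
    have hu : u ∉ q.support := fun hu => by
      have := dist_le (q.takeUntil u hu)
      have := q.length_takeUntil_le_length hu
      have := hconn.dist_triangle (u := ℓ) (v := u) (w := a)
      omega
    refine ⟨(Walk.cons hux q.reverse).toDeleteEdges _ fun e he he' => ?_⟩
    obtain rfl := Set.mem_singleton_iff.mp he'
    simp only [Walk.edges_cons, Walk.edges_reverse, List.mem_cons, List.mem_reverse] at he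
    rcases he with h | h
    · exact hcx (Sym2.congr_right.mp h)
    · exact hu (q.fst_mem_support_of_mem_edges h)

lemma Connected.exists_ne_forall_dist_lt_degree_le [Fintype V] [DecidableRel G.Adj]
    (hG : G.Connected) {b : V} (hab : a ≠ b) (hb : 3 ≤ G.degree b) :
    ∃ u ≠ a, 3 ≤ G.degree u ∧ ∀ v, G.dist u a < G.dist v a → G.degree v ≤ 2 := by
  obtain ⟨u, hu, hmax⟩ := Set.exists_max_image {v | 3 ≤ G.degree v} (G.dist · a)
    (Set.toFinite _) ⟨b, hb⟩
  refine ⟨u, ?_, hu, fun v hv => ?_⟩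
  · rintro rfl
    have := hG.pos_dist_of_ne hab.symm
    have := hmax b hb
    rw [dist_self] at this
    omega
  · by_contra! h
    have := hmax v h
    omega

lemma IsTree.exists_parent_and_two_other_neighbors [Fintype (G.neighborSet u)] (hG : G.IsTree)
    (hua : u ≠ a) (hu : 3 ≤ G.degree u) :
    ∃ w x c, G.Adj u w ∧ G.dist w a + 1 = G.dist u a ∧ G.Adj u x ∧ G.dist u a < G.dist x a ∧
      G.Adj u c ∧ x ≠ c ∧ w ≠ c := by
  classical
  obtain ⟨w, huw, hw⟩ := hG.connected.exists_adj_dist_add_one hua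
  obtain ⟨x, hx, c, hc, hxc⟩ := Finset.one_lt_card.mp <|
    show 1 < ((G.neighborFinset u).erase w).card by
      rw [Finset.card_erase_of_mem (by simpa using huw), card_neighborFinset_eq_degree]; omega
  obtain ⟨hxw, hux⟩ := Finset.mem_erase.mp hx
  obtain ⟨hcw, huc⟩ := Finset.mem_erase.mp hc
  rw [mem_neighborFinset] at hux huc
  refine ⟨w, x, c, huw, hw, hux, ?_, huc, hxc, Ne.symm hcw⟩
  by_contra! h
  exact hxw (hG.eq_of_adj_of_dist_le hux huw h (by omega))

lemma degree_eq_one_of_neighborSet_eq_singleton {p : V} [Fintype (G.neighborSet v)]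
    (h : G.neighborSet v = {p}) : G.degree v = 1 :=
  degree_eq_one_iff_existsUnique_adj.mpr
    ⟨p, (G.mem_neighborSet v p).mp (h ▸ rfl), fun r hr =>
      Set.mem_singleton_iff.mp (h ▸ (G.mem_neighborSet v r).mpr hr)⟩

end Distance

section Rotation

variable {V : Type*} {G : SimpleGraph V} {u c ℓ : V}

def rotateEdge (G : SimpleGraph V) (u c ℓ : V) : SimpleGraph V :=
  G.deleteEdges {s(u, c)} ⊔ edge ℓ c

lemma Reachable.of_forall_adj_reachable {H : SimpleGraph V}
    (h : ∀ ⦃x y⦄, G.Adj x y → H.Reachable x y) {x y : V} (hxy : G.Reachable x y) :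
    H.Reachable x y := by
  obtain ⟨p⟩ := hxy
  induction p with
  | nil => rfl
  | cons hxy _ ih => exact (h hxy).trans ih

lemma IsTree.not_reachable_deleteEdges (hG : G.IsTree) (h : G.Adj u c) :
    ¬(G.deleteEdges {s(u, c)}).Reachable u c :=
  isBridge_iff.mp (isAcyclic_iff_forall_adj_isBridge.mp hG.isAcyclic h)

lemma IsTree.rotateEdge (hG : G.IsTree) (huc : G.Adj u c)
    (hℓ : (G.deleteEdges {s(u, c)}).Reachable u ℓ) : (G.rotateEdge u c ℓ).IsTree := by
  have hsep := hG.not_reachable_deleteEdges huc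
  have hle : G.deleteEdges {s(u, c)} ≤ G.rotateEdge u c ℓ := le_sup_left
  have hℓc : ℓ ≠ c := by rintro rfl; exact hsep hℓ
  have hℓc' : (G.rotateEdge u c ℓ).Adj ℓ c := Or.inr ((edge_adj ..).mpr ⟨Or.inl ⟨rfl, rfl⟩, hℓc⟩)
  have huc' : (G.rotateEdge u c ℓ).Reachable u c := (hℓ.mono hle).trans hℓc'.reachable
  have := hG.connected.nonempty
  refine ⟨⟨fun x y => (hG.connected.preconnected x y).of_forall_adj_reachable fun x y hxy => ?_⟩,
    (hG.isAcyclic.anti (deleteEdges_le _)).sup_edge_of_not_reachable fun h => hsep (hℓ.trans h)⟩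
  by_cases he : s(x, y) = s(u, c)
  · rcases Sym2.eq_iff.mp he with ⟨rfl, rfl⟩ | ⟨rfl, rfl⟩
    exacts [huc', huc'.symm]
  · exact Adj.reachable (hle (by simp [hxy, he]))

lemma IsTree.ne_and_not_adj_of_reachable_deleteEdges (hG : G.IsTree) (huc : G.Adj u c)
    (hℓ : (G.deleteEdges {s(u, c)}).Reachable u ℓ) (hℓu : ℓ ≠ u) : ℓ ≠ c ∧ ¬G.Adj ℓ c := by
  have hsep := hG.not_reachable_deleteEdges huc
  refine ⟨by rintro rfl; exact hsep hℓ, fun hℓc => hsep (hℓ.trans (Adj.reachable ?_))⟩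
  simp [hℓc, hℓc.ne, hℓu]

variable [Fintype V] [DecidableEq V] [DecidableRel G.Adj]

lemma edgeFinset_rotateEdge [Fintype (G.rotateEdge u c ℓ).edgeSet] (hℓc : ℓ ≠ c) :
    (G.rotateEdge u c ℓ).edgeFinset = insert s(ℓ, c) (G.edgeFinset.erase s(u, c)) := by
  ext e
  rw [mem_edgeFinset]
  simp [rotateEdge, edgeSet_edge_of_ne hℓc, and_comm]

variable [DecidableRel (G.rotateEdge u c ℓ).Adj]

lemma degree_rotateEdge (huc : G.Adj u c) (hℓc : ℓ ≠ c) (hn : ¬G.Adj ℓ c) (v : V) :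
    ((G.rotateEdge u c ℓ).degree v : ℤ) =
      G.degree v + (if v = ℓ then 1 else 0) - (if v = u then 1 else 0) := by
  have hcard : (G.rotateEdge u c ℓ).degree v + (if v ∈ s(u, c) then 1 else 0) =
      G.degree v + (if v ∈ s(ℓ, c) then 1 else 0) := by
    simp only [← card_incidenceFinset_eq_degree, incidenceFinset_eq_filter,
      edgeFinset_rotateEdge hℓc, Finset.filter_insert, Finset.filter_erase]
    have hmem : s(u, c) ∈ {e ∈ G.edgeFinset | v ∈ e} ↔ v ∈ s(u, c) := by simp [huc]
    have hnmem : s(ℓ, c) ∉ {e ∈ G.edgeFinset | v ∈ e}.erase s(u, c) := by simp [hn]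
    split_ifs with hℓ hu hu
    · rw [Finset.card_insert_of_notMem hnmem, Finset.card_erase_add_one (hmem.mpr hu)]
    · rw [Finset.card_insert_of_notMem hnmem, Finset.erase_eq_of_notMem (mt hmem.mp hu)]
    · rw [add_zero, Finset.card_erase_add_one (hmem.mpr hu)]
    · rw [Finset.erase_eq_of_notMem (mt hmem.mp hu)]
  by_cases hvc : v = c
  · subst hvc
    simp_all [hℓc.symm, huc.ne.symm]
  · simp only [Sym2.mem_iff, hvc, or_false] at hcard
    split_ifs at hcard ⊢ <;> omega

lemma maxDegree_rotateEdge {a : V} (huc : G.Adj u c) (hℓc : ℓ ≠ c) (hn : ¬G.Adj ℓ c)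
    (hℓ : G.degree ℓ < G.maxDegree) (ha : G.degree a = G.maxDegree) (hau : a ≠ u) (haℓ : a ≠ ℓ) :
    (G.rotateEdge u c ℓ).maxDegree = G.maxDegree := by
  refine le_antisymm (maxDegree_le_of_forall_degree_le _ _ fun v => ?_) ?_
  · have h := degree_rotateEdge huc hℓc hn v
    have := G.degree_le_maxDegree v
    by_cases hvℓ : v = ℓ
    · subst hvℓ
      split_ifs at h <;> omega
    · rw [if_neg hvℓ] at h
      split_ifs at h <;> omega
  · have h := degree_rotateEdge huc hℓc hn a
    rw [if_neg haℓ, if_neg hau] at h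
    rw [← ha, ← (by omega : (G.rotateEdge u c ℓ).degree a = G.degree a)]
    exact degree_le_maxDegree _ _

end Rotation

section Zagreb

variable {V : Type*} [Fintype V] {G : SimpleGraph V} {u c ℓ p w : V}

lemma deg_eq_degree [DecidableRel G.Adj] (v : V) : deg G v = G.degree v := by
  unfold deg
  convert rfl

lemma maxDeg_eq_maxDegree [DecidableRel G.Adj] : maxDeg G = G.maxDegree := by
  unfold maxDeg
  convert rfl

lemma GRM_eq_sum [DecidableEq V] [DecidableRel G.Adj] (l : ℝ) :
    GRM l G = ∑ e ∈ G.edgeFinset, sym2Mul (fun v => (G.degree v : ℝ) + l) e := by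
  unfold GRM sym2Mul
  convert rfl

theorem GRM_sub_GRM_rotateEdge [DecidableEq V] [DecidableRel G.Adj] (l : ℝ) (huc : G.Adj u c)
    (hℓu : ℓ ≠ u) (hℓc : ℓ ≠ c) (hn : ¬G.Adj ℓ c) :
    GRM l G - GRM l (G.rotateEdge u c ℓ) =
      ((G.degree u : ℝ) - G.degree ℓ - 1) * (G.degree c + l) +
        ∑ y ∈ (G.neighborFinset u).erase c, ((G.degree y : ℝ) + l) -
          ∑ y ∈ G.neighborFinset ℓ, ((G.degree y : ℝ) + l) + (if G.Adj u ℓ then 1 else 0) := by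
  classical
  set φ : V → ℝ := fun v => G.degree v + l
  set δ : V → ℝ := Pi.single ℓ 1 - Pi.single u 1
  have hdeg : (fun v => ((G.rotateEdge u c ℓ).degree v : ℝ) + l) = φ + δ := by
    funext v
    simp only [φ, δ, Pi.add_apply, Pi.sub_apply, Pi.single_apply]
    rw [← Int.cast_natCast, degree_rotateEdge huc hℓc hn v]
    push_cast
    ring
  have hδ (S : V → ℝ) : ∑ v, δ v * S v = S ℓ - S u := by
    simp [δ, sub_mul, Finset.sum_sub_distrib, Pi.single_apply]
  have hE : s(u, c) ∈ G.edgeFinset := by simpa using huc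
  have hN : c ∈ G.neighborFinset u := by simpa using huc
  rw [GRM_eq_sum, GRM_eq_sum, edgeFinset_rotateEdge hℓc, Finset.sum_insert (by simp [hn]),
    hdeg, Finset.sum_erase_eq_sub hE, sum_sym2Mul_add, sum_sym2Mul_single_sub_single, hδ,
    ← Finset.add_sum_erase _ _ hN]
  simp only [φ, δ, sym2Mul_mk, Pi.add_apply, Pi.sub_apply, Pi.single_eq_same,
    Pi.single_eq_of_ne hℓu, Pi.single_eq_of_ne hℓc.symm, Pi.single_eq_of_ne huc.ne.symm,
    Pi.single_eq_of_ne' hℓu, sub_zero, sub_self, add_zero, zero_sub]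
  ring

theorem GRM_rotateEdge_lt [DecidableEq V] [DecidableRel G.Adj] {l : ℝ} (hl : -1 / 2 ≤ l)
    (huc : G.Adj u c) (hℓu : ℓ ≠ u) (hℓc : ℓ ≠ c) (hn : ¬G.Adj ℓ c)
    (hℓ : G.neighborSet ℓ = {p}) (hp : p = u ∨ G.degree p ≤ 2) (hu : 3 ≤ G.degree u)
    (huw : G.Adj u w) (hwc : w ≠ c) (hw : 2 ≤ G.degree w) :
    GRM l (G.rotateEdge u c ℓ) < GRM l G := by
  have hℓp : G.Adj ℓ p := by rw [← mem_neighborSet, hℓ]; rfl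
  have hNℓ : G.neighborFinset ℓ = {p} := by
    ext y
    rw [mem_neighborFinset, ← mem_neighborSet, hℓ, Set.mem_singleton_iff, Finset.mem_singleton]
  have hdℓ := degree_eq_one_of_neighborSet_eq_singleton hℓ
  have hdc : 1 ≤ G.degree c := G.degree_pos_iff_exists_adj c |>.mpr ⟨u, huc.symm⟩
  have hNu : ∑ y ∈ (G.neighborFinset u).erase c, ((G.degree y : ℝ) + l) =
      ∑ y ∈ (G.neighborFinset u).erase c, ((G.degree y : ℝ) - 1) +
        (G.degree u - 1) * (1 + l) := by
    rw [Finset.sum_congr rfl fun y _ =>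
        (by ring : (G.degree y : ℝ) + l = G.degree y - 1 + (1 + l)),
      Finset.sum_add_distrib, Finset.sum_const, Finset.card_erase_of_mem (by simpa using huc),
      card_neighborFinset_eq_degree, nsmul_eq_mul, Nat.cast_pred (by omega)]
  have hwt : 1 ≤ ∑ y ∈ (G.neighborFinset u).erase c, ((G.degree y : ℝ) - 1) := by
    have hwmem : w ∈ (G.neighborFinset u).erase c :=
      Finset.mem_erase.mpr ⟨hwc, (G.mem_neighborFinset u w).mpr huw⟩
    refine le_trans ?_ (Finset.single_le_sum (fun y hy => ?_) hwmem)
    · simp only [le_sub_iff_add_le]; exact_mod_cast hw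
    · have : 1 ≤ G.degree y := G.degree_pos_iff_exists_adj y |>.mpr
        ⟨u, (G.mem_neighborFinset u y).mp (Finset.mem_of_mem_erase hy) |>.symm⟩
      simp only [sub_nonneg]; exact_mod_cast this
  have hleaf : ∑ y ∈ G.neighborFinset ℓ, ((G.degree y : ℝ) + l) - (if G.Adj u ℓ then 1 else 0) ≤
      G.degree u - 1 + l := by
    rw [hNℓ, Finset.sum_singleton]
    rcases hp with rfl | hp
    · rw [if_pos hℓp.symm]; linarith
    · have : (G.degree p : ℝ) ≤ 2 := by exact_mod_cast hp
      have : (3 : ℝ) ≤ G.degree u := by exact_mod_cast hu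
      split_ifs <;> linarith
  rw [← sub_pos, GRM_sub_GRM_rotateEdge l huc hℓu hℓc hn, hNu, hdℓ, Nat.cast_one]
  have : (3 : ℝ) ≤ G.degree u := by exact_mod_cast hu
  have : (1 : ℝ) ≤ G.degree c := by exact_mod_cast hdc
  nlinarith [mul_nonneg (by linarith : (0 : ℝ) ≤ G.degree u - 2)
    (by linarith : (0 : ℝ) ≤ G.degree c + 2 * l)]

end Zagreb

end SimpleGraph

open SimpleGraph

theorem stmt3 {V : Type*} [Fintype V] (l : ℝ) (hl : -1/2 ≤ l)
    (Δ : ℕ) (hΔ : 3 ≤ Δ) (T : SimpleGraph V) (hT : T.IsTree)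
    (hmax : maxDeg T = Δ) (a b : V) (hab : a ≠ b)
    (ha : deg T a = Δ) (hb : 3 ≤ deg T b) :
    ∃ T' : SimpleGraph V, T'.IsTree ∧ maxDeg T' = Δ ∧ GRM l T' < GRM l T := by
  classical
  rw [deg_eq_degree] at ha hb
  rw [maxDeg_eq_maxDegree] at hmax
  obtain ⟨u, hua, hu, hfar⟩ := hT.connected.exists_ne_forall_dist_lt_degree_le hab hb
  obtain ⟨w, x, c, huw, hw, hux, hx, huc, hxc, hwc⟩ :=
    hT.exists_parent_and_two_other_neighbors hua hu
  have hw2 : 2 ≤ T.degree w := by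
    by_cases hwa : w = a
    · subst hwa; omega
    · exact hT.connected.two_le_degree_of_adj_of_dist_lt hwa huw.symm (by omega)
  obtain ⟨ℓ, p, hℓ, hp, hℓu, hreach⟩ := hT.exists_leaf_beyond hux hx
  replace hreach := hreach c hxc.symm
  obtain ⟨hℓc, hn⟩ := hT.ne_and_not_adj_of_reachable_deleteEdges huc hreach hℓu
  have hdℓ := degree_eq_one_of_neighborSet_eq_singleton hℓ
  refine ⟨T.rotateEdge u c ℓ, hT.rotateEdge huc hreach, ?_,
    GRM_rotateEdge_lt hl huc hℓu hℓc hn hℓ (hp.imp_right (hfar p)) hu huw hwc hw2⟩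
  rw [maxDeg_eq_maxDegree, maxDegree_rotateEdge huc hℓc hn (by omega) (ha.trans hmax.symm)
    hua.symm (by rintro rfl; omega), hmax]
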